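/- Every finite-dimensional simple module over the Taft algebra H_n(q) is 1-dimensional and isomorphic to S_i for some i ∈ ℤ_n, and S_i ≅ S_j if and only if i ≡ j (mod n); hence there are exactly n isomorphism classes of simple H_n(q)-modules. -/

import Mathlib

open scoped TensorProduct

/-- The defining relations of the Taft algebra: `g^n = 1`, `h^n = 0`, `hg = q·gh`,
where `g` (resp. `h`) is the free generator indexed by `true` (resp. `false`). -/
inductive TaftRel (k : Type) [Field k] (q : k) (n : ℕ) :
    FreeAlgebra k Bool → FreeAlgebra k Bool → Prop
  | g_pow : TaftRel k q n (FreeAlgebra.ι k true ^ n) 1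
  | h_pow : TaftRel k q n (FreeAlgebra.ι k false ^ n) 0
  | h_g : TaftRel k q n (FreeAlgebra.ι k false * FreeAlgebra.ι k true)
      (q • (FreeAlgebra.ι k true * FreeAlgebra.ι k false))

/-- The Taft algebra `H_n(q)`: the `k`-algebra generated by `g, h` subject to
`g^n = 1`, `h^n = 0`, `hg = q·gh`. -/
abbrev TaftAlgebra (k : Type) [Field k] (q : k) (n : ℕ) : Type :=
  RingQuot (TaftRel k q n)

/-- The generator `g` of the Taft algebra. -/
noncomputable def taftG (k : Type) [Field k] (q : k) (n : ℕ) : TaftAlgebra k q n :=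
  RingQuot.mkAlgHom k (TaftRel k q n) (FreeAlgebra.ι k true)

/-- The generator `h` of the Taft algebra. -/
noncomputable def taftH (k : Type) [Field k] (q : k) (n : ℕ) : TaftAlgebra k q n :=
  RingQuot.mkAlgHom k (TaftRel k q n) (FreeAlgebra.ι k false)


/-- `V` is (a copy of) the standard `H_n(q)`-module `M(l,i)`:
it has a `k`-basis `v_0, …, v_{l-1}` with `g • v_j = q^{i-j} • v_j`,
`h • v_j = v_{j+1}` (and `h • v_{l-1} = 0`).  (This is the basis `v_1, …, v_l`
of the paper re-indexed from `0`.) -/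
def StdMSpec (k : Type) [Field k] (q : k) (n : ℕ) (l : ℕ) (i : ℤ)
    (V : Type) [AddCommGroup V] [Module k V] [Module (TaftAlgebra k q n) V] : Prop :=
  ∃ v : Module.Basis (Fin l) k V,
    (∀ j : Fin l, taftG k q n • v j = q ^ (i - ((j : ℕ) : ℤ)) • v j) ∧
    (∀ j : Fin l, taftH k q n • v j =
      if h : (j : ℕ) + 1 < l then v ⟨(j : ℕ) + 1, h⟩ else 0)

/-!
Since `h` is nilpotent it kills a nonzero vector, and `hg = q·gh` makes `ker h` stable under `g`;
in a simple module `ker h` is therefore everything. Since `g ^ n = 1` and, `q` being a primitive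
`n`-th root of unity, `X ^ n - 1` splits into linear factors, `g` has an eigenvector, with
eigenvalue some `q ^ i`; as `h` acts by zero, its line is a submodule, hence the whole module.
Conversely `g ↦ q ^ i, h ↦ 0` defines a character, and two one-dimensional modules are isomorphic
exactly when their `g`-eigenvalues agree, i.e. when `i ≡ j (mod n)`.
-/

theorem exists_ne_zero_smul_eq_zero_of_pow_smul_eq_zero {M V : Type*} [Monoid M] [Zero V]
    [MulAction M V] {a : M} {m : ℕ} {x : V} (hx : x ≠ 0) (h : a ^ m • x = 0) :
    ∃ y : V, y ≠ 0 ∧ a • y = 0 := by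
  induction m generalizing x with
  | zero => exact absurd (by simpa using h) hx
  | succ m ih =>
    rw [pow_succ, mul_smul] at h
    by_cases hax : a • x = 0
    · exact ⟨x, hx, hax⟩
    · exact ih hax h

open Polynomial in
theorem Module.End.exists_hasEigenvalue_of_aeval_prod_eq_zero {R M : Type*} [CommRing R]
    [AddCommGroup M] [Module R M] [Nontrivial M] (f : Module.End R M) (s : Finset R)
    (h : aeval f (∏ μ ∈ s, (X - C μ)) = 0) :
    ∃ μ ∈ s, f.HasEigenvalue μ := by
  classical
  induction s using Finset.induction_on with
  | empty => simp at h
  | insert μ s hμ ih =>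
    rw [Finset.prod_insert hμ, map_mul] at h
    by_cases hs : aeval f (∏ ν ∈ s, (X - C ν)) = 0
    · obtain ⟨ν, hν, hf⟩ := ih hs
      exact ⟨ν, Finset.mem_insert_of_mem hν, hf⟩
    · obtain ⟨x, hx⟩ := DFunLike.ne_iff.mp hs
      refine ⟨μ, Finset.mem_insert_self μ s, Module.End.hasEigenvalue_of_hasEigenvector
        ⟨Module.End.mem_eigenspace_iff.mpr ?_, hx⟩⟩
      simpa [sub_eq_zero] using LinearMap.congr_fun h x

theorem Submodule.eq_top_of_mem_of_ne_zero {R M : Type*} [Ring R] [AddCommGroup M]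
    [Module R M] [IsSimpleModule R M] {p : Submodule R M} {x : M} (hx : x ∈ p) (hx0 : x ≠ 0) :
    p = ⊤ :=
  (eq_bot_or_eq_top p).resolve_left ((Submodule.ne_bot_iff p).mpr ⟨x, hx, hx0⟩)

theorem IsPrimitiveRoot.zpow_eq_zpow_iff_modEq {K : Type*} [Field K] {ζ : K} {n : ℕ}
    (hζ : IsPrimitiveRoot ζ n) (hn : n ≠ 0) {i j : ℤ} :
    ζ ^ i = ζ ^ j ↔ i ≡ j [ZMOD n] := by
  rw [Int.modEq_comm, Int.modEq_iff_dvd, ← hζ.zpow_eq_one_iff_dvd, zpow_sub₀ (hζ.ne_zero hn),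
    div_eq_one_iff_eq (zpow_ne_zero _ (hζ.ne_zero hn)), eq_comm]

namespace TaftAlgebra

variable {k : Type} [Field k] {q : k} {n : ℕ}

theorem taftG_pow : taftG k q n ^ n = 1 := by
  simpa [taftG] using RingQuot.mkAlgHom_rel k (TaftRel.g_pow (k := k) (q := q) (n := n))

theorem taftH_pow : taftH k q n ^ n = 0 := by
  simpa [taftH] using RingQuot.mkAlgHom_rel k (TaftRel.h_pow (k := k) (q := q) (n := n))

theorem taftH_mul_taftG : taftH k q n * taftG k q n = q • (taftG k q n * taftH k q n) := by
  simpa [taftG, taftH] using RingQuot.mkAlgHom_rel k (TaftRel.h_g (k := k) (q := q) (n := n))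

@[elab_as_elim]
theorem induction {p : TaftAlgebra k q n → Prop} (algebraMap : ∀ r, p (algebraMap k _ r))
    (taftG : p (taftG k q n)) (taftH : p (taftH k q n)) (add : ∀ a b, p a → p b → p (a + b))
    (mul : ∀ a b, p a → p b → p (a * b)) (a : TaftAlgebra k q n) : p a := by
  obtain ⟨y, rfl⟩ := RingQuot.mkAlgHom_surjective k (TaftRel k q n) a
  induction y using FreeAlgebra.induction with
  | grade0 r => simpa using algebraMap r
  | grade1 b => cases b; exacts [taftH, taftG]
  | mul a b ha hb => rw [map_mul]; exact mul _ _ ha hb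
  | add a b ha hb => rw [map_add]; exact add _ _ ha hb

noncomputable def character [NeZero n] (μ : k) (hμ : μ ^ n = 1) :
    TaftAlgebra k q n →ₐ[k] k :=
  RingQuot.liftAlgHom k ⟨FreeAlgebra.lift k (fun b => if b then μ else 0), by
    rintro a b ⟨⟩ <;> simp [hμ, NeZero.ne n]⟩

@[simp] theorem character_taftG [NeZero n] (μ : k) (hμ : μ ^ n = 1) :
    character μ hμ (taftG k q n) = μ := by
  simp [character, taftG]

@[simp] theorem character_taftH [NeZero n] (μ : k) (hμ : μ ^ n = 1) :
    character μ hμ (taftH k q n) = 0 := by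
  simp [character, taftH]

section Module

variable {V W : Type} [AddCommGroup V] [Module k V] [Module (TaftAlgebra k q n) V]
  [IsScalarTower k (TaftAlgebra k q n) V] [AddCommGroup W] [Module k W]
  [Module (TaftAlgebra k q n) W] [IsScalarTower k (TaftAlgebra k q n) W]

theorem smul_mem_of_stable (p : Submodule k V) (hg : ∀ x ∈ p, taftG k q n • x ∈ p)
    (hh : ∀ x ∈ p, taftH k q n • x ∈ p) (a : TaftAlgebra k q n) {x : V} (hx : x ∈ p) :
    a • x ∈ p := by
  induction a using induction generalizing x with
  | algebraMap r => simpa using p.smul_mem r hx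
  | taftG => exact hg x hx
  | taftH => exact hh x hx
  | add a b ha hb => rw [add_smul]; exact p.add_mem (ha hx) (hb hx)
  | mul a b ha hb => rw [mul_smul]; exact ha (hb hx)

def submoduleOfStable (p : Submodule k V) (hg : ∀ x ∈ p, taftG k q n • x ∈ p)
    (hh : ∀ x ∈ p, taftH k q n • x ∈ p) : Submodule (TaftAlgebra k q n) V where
  carrier := p
  add_mem' := p.add_mem
  zero_mem' := p.zero_mem
  smul_mem' a _ hx := smul_mem_of_stable p hg hh a hx

theorem map_smul_of_commute (f : V →ₗ[k] W)
    (hg : ∀ x, f (taftG k q n • x) = taftG k q n • f x)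
    (hh : ∀ x, f (taftH k q n • x) = taftH k q n • f x) (a : TaftAlgebra k q n) (x : V) :
    f (a • x) = a • f x := by
  induction a using induction generalizing x with
  | algebraMap r => simp
  | taftG => exact hg x
  | taftH => exact hh x
  | add a b ha hb => rw [add_smul, add_smul, map_add, ha, hb]
  | mul a b ha hb => rw [mul_smul, mul_smul, ha, hb]

theorem taftH_smul_eq_zero [IsSimpleModule (TaftAlgebra k q n) V] (x : V) :
    taftH k q n • x = 0 := by
  have hstable : ∀ y ∈ LinearMap.ker (Algebra.lsmul k k V (taftH k q n)),
      taftG k q n • y ∈ LinearMap.ker (Algebra.lsmul k k V (taftH k q n)) := by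
    intro y hy
    rw [LinearMap.mem_ker, Algebra.lsmul_apply] at hy ⊢
    rw [← mul_smul, taftH_mul_taftG, smul_assoc, mul_smul, hy, smul_zero, smul_zero]
  let K := submoduleOfStable _ hstable fun y hy => by
    rw [LinearMap.mem_ker, Algebra.lsmul_apply] at hy ⊢
    rw [hy, smul_zero]
  have := IsSimpleModule.nontrivial (TaftAlgebra k q n) V
  obtain ⟨x₀, hx₀⟩ := exists_ne (0 : V)
  obtain ⟨y, hy0, hy⟩ := exists_ne_zero_smul_eq_zero_of_pow_smul_eq_zero hx₀
    (by rw [taftH_pow, zero_smul] : taftH k q n ^ n • x₀ = 0)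
  have hx : x ∈ K := by
    rw [Submodule.eq_top_of_mem_of_ne_zero (p := K) hy hy0]
    exact Submodule.mem_top
  exact hx

theorem exists_taftG_eigenvector [NeZero n] (hq : IsPrimitiveRoot q n) [Nontrivial V] :
    ∃ i < n, ∃ z : V, z ≠ 0 ∧ taftG k q n • z = q ^ i • z := by
  have hroots := Polynomial.X_pow_sub_one_eq_prod (NeZero.pos n) hq
  obtain ⟨μ, hμ, hev⟩ :=
    (Algebra.lsmul k k V (taftG k q n)).exists_hasEigenvalue_of_aeval_prod_eq_zero _
      (by rw [← hroots]; simp [Polynomial.aeval_algHom_apply, taftG_pow])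
  obtain ⟨i, hi, rfl⟩ :=
    hq.eq_pow_of_pow_eq_one ((Polynomial.mem_nthRootsFinset (NeZero.pos n) 1).mp hμ)
  obtain ⟨z, hz, hz0⟩ := hev.exists_hasEigenvector
  exact ⟨i, hi, z, hz0, Module.End.mem_eigenspace_iff.mp hz⟩

theorem span_singleton_eq_top_of_taftG_smul_eq [IsSimpleModule (TaftAlgebra k q n) V] {z : V}
    (hz : z ≠ 0) {μ : k} (hgz : taftG k q n • z = μ • z) : Submodule.span k {z} = ⊤ := by
  have hstable : ∀ x ∈ Submodule.span k {z}, taftG k q n • x ∈ Submodule.span k {z} := by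
    intro x hx
    obtain ⟨c, rfl⟩ := Submodule.mem_span_singleton.mp hx
    rw [smul_comm, hgz, smul_smul]
    exact Submodule.smul_mem _ _ (Submodule.mem_span_singleton_self z)
  let L := submoduleOfStable _ hstable fun x _ => by
    rw [taftH_smul_eq_zero]; exact Submodule.zero_mem _
  have hL := Submodule.eq_top_of_mem_of_ne_zero (p := L) (Submodule.mem_span_singleton_self z) hz
  exact eq_top_iff.mpr fun x _ => (hL ▸ Submodule.mem_top : x ∈ L)

end Module

end TaftAlgebra

section StdMSpec

open TaftAlgebra

variable {k : Type} [Field k] {q : k} {n : ℕ} {i : ℤ}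
  {V : Type} [AddCommGroup V] [Module k V] [Module (TaftAlgebra k q n) V]

theorem stdMSpec_one_iff : StdMSpec k q n 1 i V ↔ ∃ b : Module.Basis (Fin 1) k V,
    taftG k q n • b 0 = q ^ i • b 0 ∧ taftH k q n • b 0 = 0 := by
  simp [StdMSpec, Fin.forall_fin_one]

theorem stdMSpec_one_of_finrank_eq_one (hrank : Module.finrank k V = 1) {z : V} (hz : z ≠ 0)
    (hg : taftG k q n • z = q ^ i • z) (hh : taftH k q n • z = 0) : StdMSpec k q n 1 i V :=
  stdMSpec_one_iff.mpr
    ⟨FiniteDimensional.basisSingleton (Fin 1) hrank z hz, by simpa using hg, by simpa using hh⟩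

variable [IsScalarTower k (TaftAlgebra k q n) V] {W : Type} [AddCommGroup W] [Module k W]
  [Module (TaftAlgebra k q n) W] [IsScalarTower k (TaftAlgebra k q n) W]

theorem smul_eq_of_smul_basis_eq (b : Module.Basis (Fin 1) k V) {a : TaftAlgebra k q n} {μ : k}
    (ha : a • b 0 = μ • b 0) (x : V) : a • x = μ • x := by
  have : Algebra.lsmul k k V a = μ • LinearMap.id :=
    b.ext fun j => by simpa [Fin.fin_one_eq_zero j] using ha
  exact LinearMap.congr_fun this x

theorem exists_stdMSpec_one [NeZero n] (hqn : q ^ n = 1) (i : ℤ) :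
    ∃ (V : Type) (_ : AddCommGroup V) (_ : Module k V) (_ : Module (TaftAlgebra k q n) V)
      (_ : IsScalarTower k (TaftAlgebra k q n) V), StdMSpec k q n 1 i V := by
  have hμ : (q ^ i) ^ n = 1 := by
    rw [← zpow_natCast, ← zpow_mul, mul_comm, zpow_mul, zpow_natCast, hqn, one_zpow]
  let χ := character (q := q) (q ^ i) hμ
  let _ : Module (TaftAlgebra k q n) k := Module.compHom k χ.toRingHom
  have : IsScalarTower k (TaftAlgebra k q n) k := ⟨fun c a x => by
    change χ (c • a) * x = c • (χ a * x)
    rw [map_smul, smul_mul_assoc]⟩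
  refine ⟨k, inferInstance, inferInstance, inferInstance, inferInstance,
    stdMSpec_one_of_finrank_eq_one (Module.finrank_self k) one_ne_zero ?_ ?_⟩
  · change χ _ * 1 = _
    simp [χ]
  · change χ _ * 1 = _
    simp [χ]

theorem finrank_eq_one_and_exists_stdMSpec_of_isSimpleModule [NeZero n]
    (hq : IsPrimitiveRoot q n) [IsSimpleModule (TaftAlgebra k q n) V] :
    Module.finrank k V = 1 ∧ ∃ i : ℕ, i < n ∧ StdMSpec k q n 1 (i : ℤ) V := by
  have := IsSimpleModule.nontrivial (TaftAlgebra k q n) V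
  obtain ⟨i, hi, z, hz, hgz⟩ := exists_taftG_eigenvector hq (V := V)
  have hrank : Module.finrank k V = 1 :=
    (finrank_eq_one_iff_of_nonzero z hz).mpr (span_singleton_eq_top_of_taftG_smul_eq hz hgz)
  exact ⟨hrank, i, hi,
    stdMSpec_one_of_finrank_eq_one hrank hz (by simpa using hgz) (taftH_smul_eq_zero z)⟩

theorem StdMSpec.nonempty_linearEquiv_iff [NeZero n] (hq : IsPrimitiveRoot q n) {j : ℤ}
    (hV : StdMSpec k q n 1 i V) (hW : StdMSpec k q n 1 j W) :
    Nonempty (V ≃ₗ[TaftAlgebra k q n] W) ↔ i ≡ j [ZMOD n] := by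
  obtain ⟨v, hgv, hhv⟩ := stdMSpec_one_iff.mp hV
  obtain ⟨w, hgw, hhw⟩ := stdMSpec_one_iff.mp hW
  rw [← hq.zpow_eq_zpow_iff_modEq (NeZero.ne n)]
  constructor
  · rintro ⟨e⟩
    have hev : e (v 0) ≠ 0 := (e.map_ne_zero_iff).mpr (v.ne_zero 0)
    refine smul_left_injective k hev ?_
    calc q ^ i • e (v 0) = e (taftG k q n • v 0) := by
          rw [hgv, LinearMapClass.map_smul_of_tower]
      _ = taftG k q n • e (v 0) := map_smul e _ _
      _ = q ^ j • e (v 0) := smul_eq_of_smul_basis_eq w hgw _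
  · intro hij
    let e := v.equiv w (Equiv.refl _)
    have hhv' : taftH k q n • v 0 = (0 : k) • v 0 := by rw [hhv, zero_smul]
    have hhw' : taftH k q n • w 0 = (0 : k) • w 0 := by rw [hhw, zero_smul]
    refine ⟨{ e with
      map_smul' := map_smul_of_commute e.toLinearMap (fun x => ?_) (fun x => ?_) }⟩
    · rw [smul_eq_of_smul_basis_eq v hgv, smul_eq_of_smul_basis_eq w hgw, LinearEquiv.coe_coe,
        map_smul, hij]
    · rw [smul_eq_of_smul_basis_eq v hhv', smul_eq_of_smul_basis_eq w hhw', LinearEquiv.coe_coe,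
        map_smul]

end StdMSpec

/-- Every finite-dimensional simple `H_n(q)`-module is 1-dimensional and
isomorphic to `S_i` for some `i ∈ ℤ_n`; every `S_i` exists; and `S_i ≅ S_j` iff
`i ≡ j (mod n)`.  (Hence there are exactly `n` isomorphism classes of simple modules.) -/
theorem taft_simple_modules (k : Type) [Field k] (n : ℕ) (hn : 2 ≤ n) (q : k)
    (hq : IsPrimitiveRoot q n) :
    -- each `S_i` exists
    (∀ i : ℤ, ∃ (V : Type) (_ : AddCommGroup V) (_ : Module k V)
      (_ : Module (TaftAlgebra k q n) V) (_ : IsScalarTower k (TaftAlgebra k q n) V),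
        StdMSpec k q n 1 i V) ∧
    -- every finite-dimensional simple module is 1-dimensional, and is some `S_i` with `0 ≤ i < n`
    (∀ (V : Type) [AddCommGroup V] [Module k V] [Module (TaftAlgebra k q n) V]
      [IsScalarTower k (TaftAlgebra k q n) V] [Module.Finite k V],
        IsSimpleModule (TaftAlgebra k q n) V →
          Module.finrank k V = 1 ∧ ∃ i : ℕ, i < n ∧ StdMSpec k q n 1 (i : ℤ) V) ∧
    -- `S_i ≅ S_j` if and only if `i ≡ j (mod n)`
    (∀ (i j : ℤ) (V W : Type) [AddCommGroup V] [Module k V] [Module (TaftAlgebra k q n) V]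
      [IsScalarTower k (TaftAlgebra k q n) V] [AddCommGroup W] [Module k W]
      [Module (TaftAlgebra k q n) W] [IsScalarTower k (TaftAlgebra k q n) W],
        StdMSpec k q n 1 i V → StdMSpec k q n 1 j W →
          (Nonempty (V ≃ₗ[TaftAlgebra k q n] W) ↔ i ≡ j [ZMOD n])) := by
  have : NeZero n := ⟨by omega⟩
  exact ⟨exists_stdMSpec_one hq.pow_eq_one,
    fun V _ _ _ _ _ _ => finrank_eq_one_and_exists_stdMSpec_of_isSimpleModule hq,
    fun _ _ V W _ _ _ _ _ _ _ _ hV hW => hV.nonempty_linearEquiv_iff hq hW⟩
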